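/- arXiv:1607.08337 — 2 statements merged into one kernel-verified Lean document; each statement's English description precedes it below -/
import Mathlib

section
/- Let δ₁,…,δₙ be i.i.d. Exp(β) random variables, d₁,…,dₙ real constants, and define the random count C = |{i : δᵢ - dᵢ ≥ maxⱼ(δⱼ - dⱼ) - 1}|. Then E[C] ≤ e^β. -/
/-!
Write `Zᵢ = δᵢ - dᵢ`. Index `i` is counted exactly when `Zⱼ - 1 ≤ Zᵢ` for every `j ≠ i`, and it
is the strict maximum when `Zⱼ < Zᵢ` for every `j ≠ i`; the latter events are disjoint, so their
probabilities sum to at most `1`. Conditionally on `(δⱼ)_{j ≠ i}` both events are tails of the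
exponential variable `δᵢ`, namely `{δᵢ ≥ y - 1}` and `{δᵢ > y}`, and the ratio of these tails
is at most `e^β`.
-/

open MeasureTheory ProbabilityTheory Real Set Function
open scoped Finset

lemma expMeasure_Ioi {β : ℝ} (hβ : 0 < β) (y : ℝ) :
    expMeasure β (Ioi y) = ENNReal.ofReal (exp (-(β * max y 0))) := by
  have := isProbabilityMeasure_expMeasure hβ
  rw [← compl_Iic, prob_compl_eq_one_sub measurableSet_Iic, ← ofReal_cdf, cdf_expMeasure_eq hβ]
  rcases le_or_gt 0 y with hy | hy
  · have hexp : exp (-(β * y)) ≤ 1 := exp_le_one_iff.mpr (by nlinarith)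
    rw [if_pos hy, max_eq_left hy, ← ENNReal.ofReal_one, ← ENNReal.ofReal_sub _ (by linarith)]
    congr 1
    ring
  · simp [hy.not_ge, max_eq_right hy.le]

lemma expMeasure_Ici_sub_one_le {β : ℝ} (hβ : 0 < β) (y : ℝ) :
    expMeasure β (Ici (y - 1)) ≤ ENNReal.ofReal (exp β) * expMeasure β (Ioi y) := by
  have hatom : expMeasure β {y - 1} = 0 :=
    withDensity_absolutelyContinuous _ _ Real.volume_singleton
  rw [← measure_congr (Ioi_ae_eq_Ici' hatom), expMeasure_Ioi hβ, expMeasure_Ioi hβ,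
    ← ENNReal.ofReal_mul (exp_pos _).le, ← exp_add]
  gcongr
  have : max y 0 ≤ max (y - 1) 0 + 1 :=
    max_le (by linarith [le_max_left (y - 1) 0]) (by linarith [le_max_right (y - 1) 0])
  nlinarith

lemma expMeasure_forall_sub_one_le_le {β : ℝ} (hβ : 0 < β) {κ : Type*} [Finite κ]
    (a : κ → ℝ) :
    expMeasure β {x | ∀ k, a k - 1 ≤ x} ≤
      ENNReal.ofReal (exp β) * expMeasure β {x | ∀ k, a k < x} := by
  have := isProbabilityMeasure_expMeasure hβ
  rcases isEmpty_or_nonempty κ with _ | _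
  · simp [ENNReal.one_le_ofReal, one_le_exp hβ.le]
  obtain ⟨k₀, hk₀⟩ := exists_eq_ciSup_of_finite (f := a)
  have hbdd : BddAbove (range a) := (finite_range a).bddAbove
  convert expMeasure_Ici_sub_one_le hβ (a k₀) using 3
  · ext x
    simp only [mem_ofPred_eq, mem_Ici, hk₀, sub_le_iff_le_add, ciSup_le_iff hbdd]
  · ext x
    exact ⟨fun h => h k₀, fun h k => (hk₀ ▸ le_ciSup hbdd k).trans_lt h⟩

lemma iSup_sub_one_le_iff {ι : Type*} [Finite ι] (z : ι → ℝ) (i : ι) :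
    (⨆ j, z j) - 1 ≤ z i ↔ ∀ j ≠ i, z j - 1 ≤ z i := by
  have : Nonempty ι := ⟨i⟩
  rw [sub_le_iff_le_add, ciSup_le_iff (finite_range z).bddAbove]
  simp only [← sub_le_iff_le_add]
  exact ⟨fun h j _ => h j, fun h j => (eq_or_ne j i).elim (fun hj => by simp [hj]) (h j)⟩

lemma pairwise_disjoint_setOf_forall_ne_lt {Ω ι α : Type*} [Preorder α] (z : ι → Ω → α) :
    Pairwise (Disjoint on fun i => {ω | ∀ j ≠ i, z j ω < z i ω}) :=
  fun i j hij => disjoint_left.mpr fun _ hi hj => lt_asymm (hi j hij.symm) (hj i hij)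

section Probability

variable {Ω : Type*} [MeasurableSpace Ω] {μ : Measure Ω}

lemma measure_forall_sub_one_le_le_of_indepFun [IsProbabilityMeasure μ] {β : ℝ} (hβ : 0 < β)
    {κ : Type*} [Finite κ] {X : Ω → ℝ} {Y : Ω → κ → ℝ} (hX : Measurable X) (hY : Measurable Y)
    (hXY : IndepFun X Y μ) (hlaw : μ.map X = expMeasure β) :
    μ {ω | ∀ k, Y ω k - 1 ≤ X ω} ≤ ENNReal.ofReal (exp β) * μ {ω | ∀ k, Y ω k < X ω} := by
  have := isProbabilityMeasure_expMeasure hβ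
  have hjoint : μ.map (fun ω => (Y ω, X ω)) = (μ.map Y).prod (expMeasure β) := by
    rw [← hlaw]
    exact (indepFun_iff_map_prod_eq_prod_map_map hY.aemeasurable hX.aemeasurable).mp hXY.symm
  have hsection : ∀ S, MeasurableSet S → μ ((fun ω => (Y ω, X ω)) ⁻¹' S) =
      ∫⁻ v, expMeasure β (Prod.mk v ⁻¹' S) ∂(μ.map Y) := fun S hS => by
    rw [← Measure.map_apply (hY.prodMk hX) hS, hjoint, Measure.prod_apply hS]
  have hnear : MeasurableSet {p : (κ → ℝ) × ℝ | ∀ k, p.1 k - 1 ≤ p.2} :=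
    measurableSet_setOfPred.mpr (by fun_prop)
  have htop : MeasurableSet {p : (κ → ℝ) × ℝ | ∀ k, p.1 k < p.2} :=
    measurableSet_setOfPred.mpr (by fun_prop)
  calc μ {ω | ∀ k, Y ω k - 1 ≤ X ω}
      = ∫⁻ v, expMeasure β {x | ∀ k, v k - 1 ≤ x} ∂(μ.map Y) := hsection _ hnear
    _ ≤ ∫⁻ v, ENNReal.ofReal (exp β) * expMeasure β {x | ∀ k, v k < x} ∂(μ.map Y) :=
      lintegral_mono fun v => expMeasure_forall_sub_one_le_le hβ v
    _ = ENNReal.ofReal (exp β) * μ {ω | ∀ k, Y ω k < X ω} := by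
      rw [lintegral_const_mul' _ _ ENNReal.ofReal_ne_top]
      exact congrArg _ (hsection _ htop).symm

variable {ι : Type*} [Fintype ι]

lemma measure_forall_ne_sub_one_le_le [DecidableEq ι] [IsProbabilityMeasure μ] {β : ℝ}
    (hβ : 0 < β) (d : ι → ℝ) {δ : ι → Ω → ℝ} (hmeas : ∀ i, Measurable (δ i))
    (hindep : iIndepFun δ μ) (i : ι) (hlaw : μ.map (δ i) = expMeasure β) :
    μ {ω | ∀ j ≠ i, δ j ω - d j - 1 ≤ δ i ω - d i} ≤
      ENNReal.ofReal (exp β) * μ {ω | ∀ j ≠ i, δ j ω - d j < δ i ω - d i} := by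
  have hind := (hindep.indepFun_finset {i} {i}ᶜ disjoint_compl_right hmeas).comp
    (measurable_pi_apply ⟨i, Finset.mem_singleton_self i⟩)
    (show Measurable fun (v : ({i}ᶜ : Finset ι) → ℝ) k => v k - d k + d i by fun_prop)
  convert measure_forall_sub_one_le_le_of_indepFun hβ (hmeas i) (by fun_prop) hind hlaw using 3
  all_goals
    ext ω
    simp only [mem_ofPred_eq, Subtype.forall, Finset.mem_compl, Finset.mem_singleton, comp_apply]
    refine forall₂_congr fun j _ => ?_
    constructor <;> intro h <;> linarith

lemma integral_card_filter {p : ι → Ω → Prop} [∀ i ω, Decidable (p i ω)] [IsFiniteMeasure μ]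
    (hp : ∀ i, MeasurableSet {ω | p i ω}) :
    ∫ ω, (#{i | p i ω} : ℝ) ∂μ = ∑ i, μ.real {ω | p i ω} := by
  have hindicator : ∀ i ω, (if p i ω then (1 : ℝ) else 0) = {ω | p i ω}.indicator 1 ω :=
    fun i ω => by simp [indicator_apply]
  simp_rw [Finset.card_filter, Nat.cast_sum, Nat.cast_ite, Nat.cast_one, Nat.cast_zero, hindicator]
  rw [integral_finsetSum _ fun i _ => (integrable_const 1).indicator (hp i)]
  exact Finset.sum_congr rfl fun i _ => integral_indicator_one (hp i)

lemma sum_measureReal_le_of_le_mul [IsProbabilityMeasure μ] {A B : ι → Set Ω} {c : ℝ}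
    (hc : 0 ≤ c) (hAB : ∀ i, μ (A i) ≤ ENNReal.ofReal c * μ (B i))
    (hB : ∀ i, MeasurableSet (B i)) (hdisj : Pairwise (Disjoint on B)) :
    ∑ i, μ.real (A i) ≤ c := by
  have hBsum : ∑ i, μ (B i) ≤ 1 := by
    simpa using sum_measure_le_measure_univ (μ := μ) (s := Finset.univ)
      (fun i _ => (hB i).nullMeasurableSet) fun i _ j _ hij => (hdisj hij).aedisjoint
  simp only [measureReal_def]
  rw [← ENNReal.toReal_sum fun i _ => measure_ne_top μ (A i)]
  refine ENNReal.toReal_le_of_le_ofReal hc ?_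
  calc ∑ i, μ (A i) ≤ ∑ i, ENNReal.ofReal c * μ (B i) := Finset.sum_le_sum fun i _ => hAB i
    _ = ENNReal.ofReal c * ∑ i, μ (B i) := (Finset.mul_sum _ _ _).symm
    _ ≤ ENNReal.ofReal c := mul_le_of_le_one_right' hBsum

end Probability

theorem expected_card_near_max_le_general
    {Ω : Type*} [MeasurableSpace Ω] (μ : Measure Ω) [IsProbabilityMeasure μ]
    (β : ℝ) (hβ : 0 < β) (n : ℕ) (d : Fin n → ℝ)
    (δ : Fin n → Ω → ℝ) (hmeas : ∀ i, Measurable (δ i))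
    (hindep : iIndepFun δ μ)
    (hlaw : ∀ i, Measure.map (δ i) μ = expMeasure β) :
    ∫ ω, ((Finset.univ.filter
        (fun i => (⨆ j, (δ j ω - d j)) - 1 ≤ δ i ω - d i)).card : ℝ) ∂μ
      ≤ Real.exp β := by
  have hnear : ∀ i, {ω | (⨆ j, (δ j ω - d j)) - 1 ≤ δ i ω - d i} =
      {ω | ∀ j ≠ i, δ j ω - d j - 1 ≤ δ i ω - d i} :=
    fun i => ext fun ω => iSup_sub_one_le_iff (fun j => δ j ω - d j) i
  rw [integral_card_filter fun i => hnear i ▸ measurableSet_setOfPred.mpr (by fun_prop)]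
  simp_rw [hnear]
  exact sum_measureReal_le_of_le_mul (exp_pos β).le
    (fun i => measure_forall_ne_sub_one_le_le hβ d hmeas hindep i (hlaw i))
    (fun i => measurableSet_setOfPred.mpr (by fun_prop))
    (pairwise_disjoint_setOf_forall_ne_lt fun j ω => δ j ω - d j)

/-- The expected number of indices whose shifted exponential is within 1 of the
maximum is at most `e^β`. -/
theorem expected_card_near_max_le
    {Ω : Type*} [MeasurableSpace Ω] (μ : Measure Ω) [IsProbabilityMeasure μ]
    (β : ℝ) (hβ : 0 < β) (n : ℕ) (hn : 0 < n) (d : Fin n → ℝ)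
    (δ : Fin n → Ω → ℝ) (hmeas : ∀ i, Measurable (δ i))
    (hindep : iIndepFun δ μ)
    (hlaw : ∀ i, Measure.map (δ i) μ = expMeasure β) :
    ∫ ω, ((Finset.univ.filter
        (fun i => (⨆ j, (δ j ω - d j)) - 1 ≤ δ i ω - d i)).card : ℝ) ∂μ
      ≤ Real.exp β :=
  expected_card_near_max_le_general μ β hβ n d δ hmeas hindep hlaw
end

section
/- Suppose a spanner H over graph G satisfies: for every pair x,y with d_G(x,y) ≤ D (for some D ≥ 3), d_H(x,y) ≤ α·d_G(x,y) + b. Then for every pair u,v ∈ V, d_H(u,v) ≤ (α + 2b/(D−2))·d_G(u,v) + b. -/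
/-!
Cut a shortest `u`–`v` path of `G` into pieces of integer length `k = ⌊D⌋₊` plus one shorter
remainder. Each piece costs at most `α k + b` in `H`, and since `k ≥ D - 2` the additive `b` of
every full piece is absorbed by the extra slope `2b/(D - 2)`, leaving a single `b` for the last
piece.
-/

namespace SimpleGraph

variable {V : Type*} {G H : SimpleGraph V}

lemma Reachable.exists_dist_eq_and_dist_eq_sub {u v : V} (h : G.Reachable u v) {k : ℕ}
    (hk : k ≤ G.dist u v) : ∃ w, G.dist u w = k ∧ G.dist w v = G.dist u v - k := by
  obtain ⟨p, hp⟩ := h.exists_walk_length_eq_dist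
  have huw : G.dist u (p.getVert k) ≤ k :=
    (dist_le _).trans ((p.take_length k).trans_le inf_le_left)
  have hwv : G.dist (p.getVert k) v ≤ G.dist u v - k := by
    simpa [Walk.drop_length, hp] using dist_le (p.drop k)
  have htri := (p.take k).reachable.dist_triangle_left v
  exact ⟨p.getVert k, by omega, by omega⟩

theorem dist_le_mul_add_of_forall_dist_le (hH : H.Connected) {k : ℕ} (hk : 0 < k)
    {α b c : ℝ} (hαc : α ≤ c) (hbk : b ≤ (c - α) * k)
    (hlocal : ∀ x y : V, G.dist x y ≤ k → (H.dist x y : ℝ) ≤ α * G.dist x y + b)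
    (u v : V) : (H.dist u v : ℝ) ≤ c * G.dist u v + b := by
  induction h : G.dist u v using Nat.strong_induction_on generalizing u with
  | _ n ih =>
  rcases le_or_gt n k with hnk | hkn
  · calc (H.dist u v : ℝ) ≤ α * n + b := h ▸ hlocal u v (h ▸ hnk)
      _ ≤ c * n + b := by gcongr
  · have hreach : G.Reachable u v := Reachable.of_dist_ne_zero (by omega)
    obtain ⟨w, huw, hwv⟩ := hreach.exists_dist_eq_and_dist_eq_sub (k := k) (by omega)
    calc (H.dist u v : ℝ) ≤ H.dist u w + H.dist w v := by exact_mod_cast hH.dist_triangle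
      _ ≤ (α * k + b) + (c * (n - k : ℕ) + b) :=
          add_le_add (huw ▸ hlocal u w huw.le) (ih _ (by omega) w (by omega))
      _ ≤ c * n + b := by rw [Nat.cast_sub hkn.le]; linarith

end SimpleGraph

theorem local_to_global_stretch_general {V : Type*} (G H : SimpleGraph V)
    (hH : H.Connected)
    (α b D : ℝ) (hb : 0 ≤ b) (hD : 3 ≤ D)
    (hlocal : ∀ x y : V, (G.dist x y : ℝ) ≤ D →
      (H.dist x y : ℝ) ≤ α * (G.dist x y : ℝ) + b) :
    ∀ u v : V, (H.dist u v : ℝ) ≤ (α + 2 * b / (D - 2)) * (G.dist u v : ℝ) + b := by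
  have hD2 : 0 < D - 2 := by linarith
  have hslope : 0 ≤ 2 * b / (D - 2) := by positivity
  have hfloor : D - 2 ≤ ⌊D⌋₊ := by linarith [Nat.lt_floor_add_one D]
  refine SimpleGraph.dist_le_mul_add_of_forall_dist_le hH (Nat.floor_pos.2 (by linarith))
    (by linarith) ?_ fun x y hxy ↦
      hlocal x y ((Nat.cast_le.2 hxy).trans (Nat.floor_le (by linarith)))
  calc b ≤ 2 * b / (D - 2) * (D - 2) := by rw [div_mul_cancel₀ _ hD2.ne']; linarith
    _ ≤ (α + 2 * b / (D - 2) - α) * ⌊D⌋₊ := by rw [add_sub_cancel_left]; gcongr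

/-- Local-to-global stretch: if a spanner `H` of `G` satisfies
`d_H(x,y) ≤ α·d_G(x,y) + b` for all pairs at `G`-distance at most `D ≥ 3`,
then `d_H(u,v) ≤ (α + 2b/(D−2))·d_G(u,v) + b` for all pairs. -/
theorem local_to_global_stretch {V : Type*} (G H : SimpleGraph V)
    (hG : G.Connected) (hH : H.Connected) (hHG : H ≤ G)
    (α b D : ℝ) (hα : 1 ≤ α) (hb : 0 ≤ b) (hD : 3 ≤ D)
    (hlocal : ∀ x y : V, (G.dist x y : ℝ) ≤ D →
      (H.dist x y : ℝ) ≤ α * (G.dist x y : ℝ) + b) :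
    ∀ u v : V, (H.dist u v : ℝ) ≤ (α + 2 * b / (D - 2)) * (G.dist u v : ℝ) + b :=
  local_to_global_stretch_general G H hH α b D hb hD hlocal
end
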